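/- arXiv:2008.09510 — 2 statements merged into one kernel-verified Lean document; each statement's English description precedes it below -/
import Mathlib

section
/- Suppose 0 < p_l < ε ≤ p < 1, 0 < θ < 1, and 0 ≤ k ≤ n with k/n ≤ p_l. Then for every prior distribution F on [0,1] satisfying F(ε) = θ and F(p_l⁻) = 0, the posterior confidence Pr(X ≤ p | k,n) is at least ε^k(1-ε)^{n-k}θ / (ε^k(1-ε)^{n-k}θ + p^k(1-p)^{n-k}(1-θ)). -/
open MeasureTheory Set

lemma stmt4_aux (a b A B : ℝ) (ha : 0 < a) (hb : 0 ≤ b) (hA : a ≤ A) (hB0 : 0 ≤ B)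
    (hB : B ≤ b) : a / (a + b) ≤ A / (A + B) := by
  rw [div_le_div_iff₀ (by linarith) (by linarith)]
  nlinarith [mul_le_mul_of_nonneg_left hB ha.le, mul_le_mul_of_nonneg_right hA hb]


/-- For `0 < p_l < ε ≤ p < 1`, `θ ∈ (0,1)`, `0 ≤ k ≤ n` with `k/n ≤ p_l`: for every prior
distribution `F` on `[0,1]` with `Pr(X ≤ ε) = θ` and no mass below `p_l`, the posterior
confidence `Pr(X ≤ p | k,n)` is at least
`ε^k(1-ε)^{n-k}θ / (ε^k(1-ε)^{n-k}θ + p^k(1-p)^{n-k}(1-θ))`. -/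
theorem stmt4 (pl ε p θ : ℝ) (hpl : 0 < pl) (hplε : pl < ε) (hεp : ε ≤ p) (hp : p < 1)
    (hθ : θ ∈ Set.Ioo (0:ℝ) 1) (k n : ℕ) (hkn : k ≤ n) (hn : 1 ≤ n)
    (hlik : (k : ℝ) / n ≤ pl)
    (μ : Measure ℝ) [IsProbabilityMeasure μ]
    (hsupp : μ (Set.Ici pl)ᶜ = 0)
    (hε : μ (Set.Iic ε) = ENNReal.ofReal θ) :
    (ε ^ k * (1 - ε) ^ (n - k) * θ) /
        (ε ^ k * (1 - ε) ^ (n - k) * θ + p ^ k * (1 - p) ^ (n - k) * (1 - θ)) ≤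
      (∫ x in Set.Icc pl p, x ^ k * (1 - x) ^ (n - k) ∂μ) /
        (∫ x in Set.Icc pl 1, x ^ k * (1 - x) ^ (n - k) ∂μ) := by
  obtain ⟨hθ0, hθ1⟩ := hθ
  have hε1 : ε < 1 := lt_of_le_of_lt hεp hp
  have hε0 : 0 < ε := hpl.trans hplε
  have hp0 : 0 < p := hε0.trans_le hεp
  have hplp : pl ≤ p := (hplε.trans_le hεp).le
  have hpl1 : pl ≤ 1 := hplp.trans hp.le
  have hnp : (0:ℝ) < n := by exact_mod_cast hn
  have hknR : (k:ℝ) ≤ n * pl := by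
    rw [div_le_iff₀ hnp] at hlik; linarith
  have hkltn : k < n := by
    rcases lt_or_eq_of_le hkn with h | h
    · exact h
    · exfalso; subst h; nlinarith
  set m := n - k with hm
  have hmn : k + m = n := Nat.add_sub_cancel' hkn
  have hm1 : 1 ≤ m := by omega
  clear_value m
  set g : ℝ → ℝ := fun x => x ^ k * (1 - x) ^ m with hg
  have hgc : Continuous g :=
    (continuous_pow k).mul ((continuous_const.sub continuous_id).pow m)
  have hd : ∀ x : ℝ, HasDerivAt g
      ((k:ℝ) * x^(k-1) * (1-x)^m + x^k * ((m:ℝ) * (1-x)^(m-1) * (-1))) x := by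
    intro x
    have h1 : HasDerivAt (fun x:ℝ => x^k) ((k:ℝ) * x^(k-1)) x := hasDerivAt_pow k x
    have h0 : HasDerivAt (fun x:ℝ => 1 - x) (-1) x := (hasDerivAt_id x).const_sub 1
    have h2 : HasDerivAt (fun x:ℝ => (1-x)^m) ((m:ℝ) * (1-x)^(m-1) * (-1)) x := by
      exact (hasDerivAt_pow m (1-x)).comp x h0
    exact h1.mul h2
  -- g is antitone on [pl, 1]
  have hanti : AntitoneOn g (Icc pl 1) := by
    apply antitoneOn_of_deriv_nonpos (convex_Icc pl 1) hgc.continuousOn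
      (fun x _ => (hd x).differentiableAt.differentiableWithinAt)
    intro x hx
    rw [interior_Icc] at hx
    obtain ⟨hx1, hx2⟩ := hx
    rw [(hd x).deriv]
    have hx0 : 0 < x := hpl.trans hx1
    have hx3 : 0 < 1 - x := by linarith
    obtain ⟨i, rfl⟩ : ∃ i, m = i + 1 := ⟨m - 1, by omega⟩
    have hnx : (k:ℝ) ≤ n * x := le_trans hknR (by nlinarith)
    rcases k with _ | j
    · have h5 : (0:ℝ) ≤ (1-x)^i := pow_nonneg hx3.le i
      simp only [Nat.cast_zero, pow_zero, Nat.add_sub_cancel]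
      push_cast
      nlinarith
    · have hnR : (n:ℝ) = (j:ℝ) + (i:ℝ) + 2 := by
        rw [← hmn]; push_cast; ring
      have key : ((j:ℝ)+1)*(1-x) ≤ ((i:ℝ)+1)*x := by
        push_cast [hnR] at hnx ⊢; nlinarith
      have h4 : (0:ℝ) ≤ x^j*(1-x)^i := by positivity
      simp only [Nat.add_sub_cancel]
      push_cast
      rw [pow_succ, pow_succ]
      nlinarith [mul_le_mul_of_nonneg_left key h4]
  -- nonnegativity of g on [pl,1]
  have hgnn : ∀ x ∈ Icc pl 1, 0 ≤ g x := by
    intro x hx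
    have : (0:ℝ) ≤ x := le_trans hpl.le hx.1
    have : (0:ℝ) ≤ 1 - x := by linarith [hx.2]
    positivity
  -- integrability
  have hint : ∀ a b : ℝ, IntegrableOn g (Icc a b) μ := fun a b => hgc.integrableOn_Icc
  have hintIoc : IntegrableOn g (Ioc p 1) μ := (hint p 1).mono_set Ioc_subset_Icc_self
  -- measure facts
  have hIio : μ (Iio pl) = 0 := by rwa [← compl_Ici]
  have hμIcc : μ (Icc pl ε) = ENNReal.ofReal θ := by
    rw [← hε]
    apply le_antisymm (measure_mono (fun x hx => hx.2))
    calc μ (Iic ε) ≤ μ (Iio pl ∪ Icc pl ε) := by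
          apply measure_mono; intro x hx
          rcases lt_or_ge x pl with h | h
          · exact Or.inl h
          · exact Or.inr ⟨h, hx⟩
      _ ≤ μ (Iio pl) + μ (Icc pl ε) := measure_union_le _ _
      _ = μ (Icc pl ε) := by rw [hIio, zero_add]
  have hμIoc : (μ (Ioc p 1)).toReal ≤ 1 - θ := by
    have h1 : μ (Ioc p 1) ≤ μ (Iic ε)ᶜ := by
      apply measure_mono; intro x hx
      simp only [mem_compl_iff, mem_Iic, not_le]
      exact lt_of_le_of_lt hεp hx.1
    have h2 : μ (Iic ε)ᶜ = 1 - ENNReal.ofReal θ := by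
      rw [measure_compl measurableSet_Iic (measure_ne_top μ _), hε, measure_univ]
    rw [h2] at h1
    calc (μ (Ioc p 1)).toReal ≤ (1 - ENNReal.ofReal θ).toReal :=
          ENNReal.toReal_mono (by simp [ENNReal.sub_ne_top]) h1
      _ = 1 - θ := by
          rw [ENNReal.toReal_sub_of_le (by simpa using hθ1.le) (by simp)]
          simp [ENNReal.toReal_ofReal hθ0.le]
  -- lower bound for the numerator
  have hA : g ε * θ ≤ ∫ x in Icc pl p, g x ∂μ := by
    have h1 : ∫ x in Icc pl ε, g x ∂μ ≤ ∫ x in Icc pl p, g x ∂μ := by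
      apply setIntegral_mono_set (hint pl p)
      · filter_upwards [ae_restrict_mem measurableSet_Icc] with x hx
        exact hgnn x ⟨hx.1, hx.2.trans hp.le⟩
      · exact Filter.Eventually.of_forall (fun x hx => ⟨hx.1, hx.2.trans hεp⟩)
    have h2 : ∫ x in Icc pl ε, (g ε : ℝ) ∂μ ≤ ∫ x in Icc pl ε, g x ∂μ := by
      apply setIntegral_mono_on (integrableOn_const (measure_lt_top μ (Icc pl ε)).ne enorm_ne_top)
        (hint pl ε) measurableSet_Icc
      intro x hx
      exact hanti ⟨hx.1, (hx.2.trans hε1.le)⟩ ⟨hplε.le, hε1.le⟩ hx.2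
    rw [setIntegral_const, measureReal_def, hμIcc, ENNReal.toReal_ofReal hθ0.le, smul_eq_mul, mul_comm] at h2
    linarith
  -- upper bound for the tail
  have hB : ∫ x in Ioc p 1, g x ∂μ ≤ g p * (1 - θ) := by
    have h1 : ∫ x in Ioc p 1, g x ∂μ ≤ ∫ x in Ioc p 1, (g p : ℝ) ∂μ := by
      apply setIntegral_mono_on hintIoc
        (integrableOn_const (measure_lt_top μ (Ioc p 1)).ne enorm_ne_top) measurableSet_Ioc
      intro x hx
      exact hanti ⟨hplp, hp.le⟩ ⟨hplp.trans hx.1.le, hx.2⟩ hx.1.le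
    rw [setIntegral_const, smul_eq_mul] at h1
    have hgp : 0 ≤ g p := hgnn p ⟨hplp, hp.le⟩
    calc ∫ x in Ioc p 1, g x ∂μ ≤ (μ (Ioc p 1)).toReal * g p := h1
      _ ≤ (1 - θ) * g p := mul_le_mul_of_nonneg_right hμIoc hgp
      _ = g p * (1 - θ) := mul_comm _ _
  have hB0 : 0 ≤ ∫ x in Ioc p 1, g x ∂μ := by
    apply setIntegral_nonneg measurableSet_Ioc
    intro x hx
    exact hgnn x ⟨hplp.trans hx.1.le, hx.2⟩
  -- split the denominator
  have hsplit : ∫ x in Icc pl 1, g x ∂μ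
      = (∫ x in Icc pl p, g x ∂μ) + ∫ x in Ioc p 1, g x ∂μ := by
    rw [← Icc_union_Ioc_eq_Icc hplp hp.le]
    exact setIntegral_union ((Iic_disjoint_Ioc le_rfl).mono Icc_subset_Iic_self le_rfl)
      measurableSet_Ioc (hint pl p) hintIoc
  -- conclude
  have hgε : 0 < g ε * θ := by
    have h1 : 0 < 1 - ε := by linarith
    have h2 : 0 < ε ^ k * (1 - ε) ^ m * θ := by positivity
    exact h2
  have hgp1 : 0 ≤ g p * (1 - θ) := mul_nonneg (hgnn p ⟨hplp, hp.le⟩) (by linarith)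
  rw [hsplit]
  exact stmt4_aux (g ε * θ) (g p * (1 - θ)) _ _ hgε hgp1 hA hB0 hB
end

section
/- Fix 0 < p_l < ε < p_B < 1, θ,φ ∈ (0,1) with φ > 1-θ, and c ∈ (0,1). The function n_A ↦ n_B(n_A) given by n_B(n_A) = [ln((((1-θ)(1-p_B)^{n_A} + (1-p_l)^{n_A}(1-φ))·c)/((φ-1+θ)(1-c))) - n_A ln(1-ε)] / [ln(1-ε) - ln(1-p_B)] has derivative zero at n_A* = ln( -((1-θ)/(1-φ)) · ln((1-p_B)/(1-ε)) / ln((1-p_l)/(1-ε)) ) / (ln(1-p_l) - ln(1-p_B)), provided this quantity is well-defined and positive. -/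
open Real

/-- The function `n_A ↦ n_B(n_A)` of the bivariate CBI model has derivative zero at
`n_A* = ln(-((1-θ)/(1-φ))·ln((1-p_B)/(1-ε))/ln((1-p_l)/(1-ε))) / (ln(1-p_l) - ln(1-p_B))`,
provided this quantity is well-defined and positive. -/
theorem stmt17 (pl ε pB θ φ c : ℝ) (hpl : 0 < pl) (hplε : pl < ε) (hεpB : ε < pB)
    (hpB : pB < 1) (hθ : θ ∈ Set.Ioo (0:ℝ) 1) (hφ : φ ∈ Set.Ioo (0:ℝ) 1)
    (hc : c ∈ Set.Ioo (0:ℝ) 1) (hφθ : 1 - θ < φ)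
    (nB : ℝ → ℝ)
    (hnB : ∀ nA : ℝ, nB nA =
      (Real.log ((((1 - θ) * (1 - pB) ^ nA + (1 - pl) ^ nA * (1 - φ)) * c) /
          ((φ - 1 + θ) * (1 - c))) - nA * Real.log (1 - ε)) /
        (Real.log (1 - ε) - Real.log (1 - pB)))
    (nAstar : ℝ)
    (hstar : nAstar =
      Real.log (-((1 - θ) / (1 - φ)) * Real.log ((1 - pB) / (1 - ε)) /
          Real.log ((1 - pl) / (1 - ε))) /
        (Real.log (1 - pl) - Real.log (1 - pB)))
    (hpos : 0 < nAstar) :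
    deriv nB nAstar = 0 := by
  obtain ⟨hθ0, hθ1⟩ := hθ
  obtain ⟨hφ0, hφ1⟩ := hφ
  obtain ⟨hc0, hc1⟩ := hc
  have hu : (0:ℝ) < 1 - pB := by linarith
  have hv : (0:ℝ) < 1 - pl := by linarith
  have he : (0:ℝ) < 1 - ε := by linarith
  have hθ' : (0:ℝ) < 1 - θ := by linarith
  have hφ' : (0:ℝ) < 1 - φ := by linarith
  have hd : (0:ℝ) < φ - 1 + θ := by linarith
  have hc' : (0:ℝ) < 1 - c := by linarith
  have hlogue : Real.log (1 - pB) < Real.log (1 - ε) := Real.log_lt_log hu (by linarith)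
  have hlogev : Real.log (1 - ε) < Real.log (1 - pl) := Real.log_lt_log he (by linarith)
  set A : ℝ := -((1 - θ) / (1 - φ)) * Real.log ((1 - pB) / (1 - ε)) /
      Real.log ((1 - pl) / (1 - ε)) with hAdef
  have hlogu : Real.log ((1 - pB) / (1 - ε)) = Real.log (1 - pB) - Real.log (1 - ε) :=
    Real.log_div (ne_of_gt hu) (ne_of_gt he)
  have hlogv : Real.log ((1 - pl) / (1 - ε)) = Real.log (1 - pl) - Real.log (1 - ε) :=
    Real.log_div (ne_of_gt hv) (ne_of_gt he)
  have hA : 0 < A := by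
    rw [hAdef, hlogu, hlogv]
    apply div_pos
    · have : Real.log (1 - pB) - Real.log (1 - ε) < 0 := by linarith
      nlinarith [div_pos hθ' hφ']
    · linarith
  have hvu : Real.log (1 - pl) - Real.log (1 - pB) ≠ 0 := by
    intro h; nlinarith
  -- key: (1-pl)^nAstar = A * (1-pB)^nAstar
  have hlogA : nAstar * (Real.log (1 - pl) - Real.log (1 - pB)) = Real.log A := by
    rw [hstar, div_mul_cancel₀ _ hvu]
  have key : (1 - pl) ^ nAstar = A * (1 - pB) ^ nAstar := by
    rw [Real.rpow_def_of_pos hv, Real.rpow_def_of_pos hu, ← Real.exp_log hA, ← Real.exp_add]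
    congr 1
    nlinarith [hlogA]
  -- positivity facts
  have hpxu : (0:ℝ) < (1 - pB) ^ nAstar := Real.rpow_pos_of_pos hu _
  have hpxv : (0:ℝ) < (1 - pl) ^ nAstar := Real.rpow_pos_of_pos hv _
  have hhpos : (0:ℝ) < (1 - θ) * (1 - pB) ^ nAstar + (1 - pl) ^ nAstar * (1 - φ) := by
    positivity
  have hK : ((φ - 1 + θ) * (1 - c)) ≠ 0 := by positivity
  have hgpos : (0:ℝ) < ((1 - θ) * (1 - pB) ^ nAstar + (1 - pl) ^ nAstar * (1 - φ)) * c /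
      ((φ - 1 + θ) * (1 - c)) := by positivity
  -- derivative computation
  have Hh : HasDerivAt (fun x : ℝ => (1 - θ) * (1 - pB) ^ x + (1 - pl) ^ x * (1 - φ))
      ((1 - θ) * ((1 - pB) ^ nAstar * Real.log (1 - pB)) +
        ((1 - pl) ^ nAstar * Real.log (1 - pl)) * (1 - φ)) nAstar :=
    (((Real.hasStrictDerivAt_const_rpow hu nAstar).hasDerivAt.const_mul _).add
      ((Real.hasStrictDerivAt_const_rpow hv nAstar).hasDerivAt.mul_const _))
  have Hg : HasDerivAt (fun x : ℝ => ((1 - θ) * (1 - pB) ^ x + (1 - pl) ^ x * (1 - φ)) * c /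
      ((φ - 1 + θ) * (1 - c)))
      (((1 - θ) * ((1 - pB) ^ nAstar * Real.log (1 - pB)) +
        ((1 - pl) ^ nAstar * Real.log (1 - pl)) * (1 - φ)) * c / ((φ - 1 + θ) * (1 - c)))
      nAstar := (Hh.mul_const c).div_const _
  have Hnum : HasDerivAt (fun x : ℝ =>
      Real.log (((1 - θ) * (1 - pB) ^ x + (1 - pl) ^ x * (1 - φ)) * c /
        ((φ - 1 + θ) * (1 - c))) - x * Real.log (1 - ε))
      ((((1 - θ) * ((1 - pB) ^ nAstar * Real.log (1 - pB)) +
        ((1 - pl) ^ nAstar * Real.log (1 - pl)) * (1 - φ)) * c / ((φ - 1 + θ) * (1 - c))) /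
        (((1 - θ) * (1 - pB) ^ nAstar + (1 - pl) ^ nAstar * (1 - φ)) * c /
          ((φ - 1 + θ) * (1 - c))) - 1 * Real.log (1 - ε)) nAstar :=
    (Hg.log (ne_of_gt hgpos)).sub ((hasDerivAt_id nAstar).mul_const _)
  have HnB : HasDerivAt nB
      (((((1 - θ) * ((1 - pB) ^ nAstar * Real.log (1 - pB)) +
        ((1 - pl) ^ nAstar * Real.log (1 - pl)) * (1 - φ)) * c / ((φ - 1 + θ) * (1 - c))) /
        (((1 - θ) * (1 - pB) ^ nAstar + (1 - pl) ^ nAstar * (1 - φ)) * c /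
          ((φ - 1 + θ) * (1 - c))) - 1 * Real.log (1 - ε)) /
        (Real.log (1 - ε) - Real.log (1 - pB))) nAstar := by
    have : nB = fun nA => (Real.log ((((1 - θ) * (1 - pB) ^ nA + (1 - pl) ^ nA * (1 - φ)) * c) /
          ((φ - 1 + θ) * (1 - c))) - nA * Real.log (1 - ε)) /
        (Real.log (1 - ε) - Real.log (1 - pB)) := funext hnB
    rw [this]
    exact Hnum.div_const _
  rw [HnB.deriv]
  -- main algebraic identity
  have hmain : (1 - θ) * ((1 - pB) ^ nAstar * Real.log (1 - pB)) +
      ((1 - pl) ^ nAstar * Real.log (1 - pl)) * (1 - φ) =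
      Real.log (1 - ε) * ((1 - θ) * (1 - pB) ^ nAstar + (1 - pl) ^ nAstar * (1 - φ)) := by
    rw [key, hAdef, hlogu, hlogv]
    have hvE : Real.log (1 - pl) - Real.log (1 - ε) ≠ 0 := by linarith
    field_simp
    ring
  apply div_eq_zero_iff.mpr
  left
  rw [hmain]
  field_simp
  ring
end
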